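/- arXiv:2206.14067 — 12 statements merged into one kernel-verified Lean document; each statement's English description precedes it below -/
import Mathlib

section
/- There are infinitely many triples (a, b, c) of integers with a, b > 1, gcd(a, b) = 1, and c odd such that the equation a^x + b^y = c^z has exactly two solutions in positive integers (x, y, z). -/
/-!
The triples are `(2 ^ k - 1, 2, 2 ^ k + 1)` with `k ≡ 1 (mod 6)`, `k > 1`; their only solutions
are `(1, 1, 1)` and `(2, k + 2, 2)`. Write `a = 2 ^ k - 1` and `c = 2 ^ k + 1`. Modulo 9 we have
`a ≡ 1` and `c ≡ 3`, so for `z ≥ 2` the power `2 ^ y` is not `≡ 2`, i.e. `y ≢ 1 (mod 6)`; this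
excludes `y = 1` and `y = k`. For `y ≥ 2`, reducing modulo 4 makes `x` even, and since
`a ^ 2 ≡ c ^ 2 ≡ 1 (mod 2 ^ (k + 1))` an odd `z` would give `2 ^ y ≡ 2 ^ k`, i.e. `y = k`.
So `x = 2X`, `z = 2Z`, and factoring `c ^ (2Z) - a ^ (2X) = 2 ^ y` gives `c ^ Z = a ^ X + 2` and
`a ^ X + 1 = 2 ^ (y - 2)`; modulo `2 ^ (k + 1)` the latter forces `X = 1`, hence `Z = 1`.
-/

open Nat

lemma pow_modEq_pow_mod {a p m : ℕ} (h : a ^ p ≡ 1 [MOD m]) (n : ℕ) :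
    a ^ n ≡ a ^ (n % p) [MOD m] :=
  calc a ^ n = (a ^ p) ^ (n / p) * a ^ (n % p) := by rw [← pow_mul, ← pow_add, Nat.div_add_mod]
    _ ≡ 1 ^ (n / p) * a ^ (n % p) [MOD m] := (h.pow _).mul_right _
    _ = a ^ (n % p) := by rw [one_pow, one_mul]

lemma eq_of_two_pow_modEq_two_pow {m j k : ℕ} (hj : j ≤ k)
    (h : 2 ^ m ≡ 2 ^ j [MOD 2 ^ (k + 1)]) : m = j := by
  have hj' : 2 ^ j < 2 ^ (k + 1) := Nat.pow_lt_pow_right one_lt_two (by omega)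
  rcases le_or_gt m k with hm | hm
  · have hm' : 2 ^ m < 2 ^ (k + 1) := Nat.pow_lt_pow_right one_lt_two (by omega)
    rw [ModEq, mod_eq_of_lt hm', mod_eq_of_lt hj'] at h
    exact Nat.pow_right_injective le_rfl h
  · rw [ModEq, mod_eq_zero_of_dvd (pow_dvd_pow 2 hm), mod_eq_of_lt hj'] at h
    exact absurd h.symm (pow_ne_zero j two_ne_zero)

lemma exists_two_pow_of_sq_add_two_pow_eq_sq {q p y : ℕ} (hq : Odd q)
    (h : q ^ 2 + 2 ^ y = p ^ 2) :
    ∃ t, q + 1 = 2 ^ t ∧ p = q + 2 ∧ y = t + 2 := by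
  have hqp : q < p :=
    (Nat.pow_lt_pow_iff_left two_ne_zero).mp (h ▸ Nat.lt_add_of_pos_right (by positivity))
  have hfac : (p - q) * (p + q) = 2 ^ y := by
    rw [mul_comm, ← Nat.sq_sub_sq, ← h, Nat.add_sub_cancel_left]
  obtain ⟨s, -, hs⟩ := (Nat.dvd_prime_pow prime_two).mp (Dvd.intro _ hfac)
  obtain ⟨u, -, hu⟩ := (Nat.dvd_prime_pow prime_two).mp (Dvd.intro_left _ hfac)
  have hy : y = s + u :=
    Nat.pow_right_injective le_rfl (by simp only [pow_add, ← hs, ← hu, hfac])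
  have hsum : 2 * q + 2 ^ s = 2 ^ u := by omega
  -- `2 * q ≡ 2 (mod 4)`, so the smaller factor `p - q = 2 ^ s` must be `2`.
  obtain rfl : s = 1 := by
    obtain ⟨r, rfl⟩ := hq
    rcases s with _ | _ | s <;> rcases u with _ | _ | u <;> simp only [pow_succ, pow_zero] at hsum
    all_goals omega
  rcases u with _ | t
  · simp only [pow_zero] at hsum; omega
  · refine ⟨t, ?_, by omega, by omega⟩
    rw [pow_succ] at hsum
    omega

section

variable {k x y z : ℕ}

lemma two_pow_sub_one_sq_modEq_one (hk : 1 ≤ k) : (2 ^ k - 1) ^ 2 ≡ 1 [MOD 2 ^ (k + 1)] := by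
  obtain ⟨j, rfl⟩ : ∃ j, k = j + 1 := ⟨k - 1, by omega⟩
  have : (2 ^ (j + 1) - 1) ^ 2 = 2 ^ (j + 2) * (2 ^ j - 1) + 1 := by
    zify [Nat.one_le_two_pow (n := j), Nat.one_le_two_pow (n := j + 1)]
    ring
  rw [ModEq, this, mul_add_mod]

lemma two_pow_add_one_sq_modEq_one (hk : 1 ≤ k) : (2 ^ k + 1) ^ 2 ≡ 1 [MOD 2 ^ (k + 1)] := by
  obtain ⟨j, rfl⟩ : ∃ j, k = j + 1 := ⟨k - 1, by omega⟩
  have : (2 ^ (j + 1) + 1) ^ 2 = 2 ^ (j + 2) * (2 ^ j + 1) + 1 := by ring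
  rw [ModEq, this, mul_add_mod]

lemma odd_two_pow_sub_one (hk : k ≠ 0) : Odd (2 ^ k - 1) :=
  Nat.Even.sub_odd Nat.one_le_two_pow ((Nat.even_pow' hk).mpr even_two) odd_one

lemma eq_one_of_two_pow_sub_one_pow_add_one {t : ℕ} (hk : 2 ≤ k) (hx : x ≠ 0)
    (h : (2 ^ k - 1) ^ x + 1 = 2 ^ t) : x = 1 ∧ t = k := by
  have h4 : 4 ≤ 2 ^ k := by simpa using Nat.pow_le_pow_right two_pos hk
  have hle : 2 ^ k - 1 ≤ (2 ^ k - 1) ^ x := Nat.le_self_pow hx _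
  have hmod := pow_modEq_pow_mod (two_pow_sub_one_sq_modEq_one (by omega : 1 ≤ k)) x
  have ht : t = k := by
    rcases Nat.mod_two_eq_zero_or_one x with h0 | h1
    · have : 2 ^ t ≡ 2 ^ 1 [MOD 2 ^ (k + 1)] := by
        rw [← h]; simpa [h0] using hmod.add_right 1
      have := eq_of_two_pow_modEq_two_pow (by omega) this
      subst this; omega
    · have : 2 ^ t ≡ 2 ^ k [MOD 2 ^ (k + 1)] := by
        rw [← h]; simpa [h1, Nat.sub_add_cancel (by omega : 1 ≤ 2 ^ k)] using hmod.add_right 1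
      exact eq_of_two_pow_modEq_two_pow le_rfl this
  rw [ht] at h
  exact ⟨(Nat.pow_eq_self_iff (by omega)).mp (by omega : (2 ^ k - 1) ^ x = 2 ^ k - 1), ht⟩

lemma mod_six_ne_one_of_two_pow_sub_one_pow_add_two_pow_eq (hk : k % 6 = 1) (hz : 2 ≤ z)
    (h : (2 ^ k - 1) ^ x + 2 ^ y = (2 ^ k + 1) ^ z) : y % 6 ≠ 1 := by
  have h9 : 2 ^ 6 ≡ 1 [MOD 9] := by decide
  have hk9 : 2 ^ k ≡ 2 [MOD 9] := by simpa [hk] using pow_modEq_pow_mod h9 k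
  have ha : (2 ^ k - 1) ^ x ≡ 1 [MOD 9] := by
    have : 1 ≤ 2 ^ k := Nat.one_le_two_pow
    simpa using (show 2 ^ k - 1 ≡ 1 [MOD 9] by unfold ModEq at hk9 ⊢; omega).pow x
  have hc : (2 ^ k + 1) ^ z ≡ 0 [MOD 9] := by
    have h3 : 3 ∣ 2 ^ k + 1 := by unfold ModEq at hk9; omega
    exact modEq_zero_iff_dvd.mpr ((pow_dvd_pow_of_dvd h3 2).trans (pow_dvd_pow _ hz))
  intro hy
  have hy9 : 2 ^ y ≡ 2 [MOD 9] := by simpa [hy] using pow_modEq_pow_mod h9 y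
  have := (ha.add hy9).symm.trans (h ▸ hc)
  unfold ModEq at this
  omega

lemma even_of_two_pow_sub_one_pow_add_two_pow_eq (hk : 2 ≤ k) (hy : 2 ≤ y)
    (h : (2 ^ k - 1) ^ x + 2 ^ y = (2 ^ k + 1) ^ z) : Even x := by
  have h4 : 2 ^ 2 ∣ 2 ^ k := pow_dvd_pow 2 hk
  have : 1 ≤ 2 ^ k := Nat.one_le_two_pow
  have ha : (2 ^ k - 1) ^ x ≡ 3 ^ (x % 2) [MOD 4] :=
    ((show 2 ^ k - 1 ≡ 3 [MOD 4] by unfold ModEq; omega).pow x).trans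
      (pow_modEq_pow_mod (by decide) x)
  have hb : 2 ^ y ≡ 0 [MOD 4] := modEq_zero_iff_dvd.mpr (pow_dvd_pow 2 hy)
  have hc : (2 ^ k + 1) ^ z ≡ 1 [MOD 4] := by
    simpa using (show 2 ^ k + 1 ≡ 1 [MOD 4] by unfold ModEq; omega).pow z
  have := (ha.add hb).symm.trans (h ▸ hc)
  rw [Nat.even_iff]
  rcases Nat.mod_two_eq_zero_or_one x with h0 | h1
  · exact h0
  · simp [h1, ModEq] at this

lemma eq_of_two_pow_sub_one_pow_add_two_pow_eq_of_odd (hk : 1 ≤ k) (hx : Even x) (hz : Odd z)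
    (h : (2 ^ k - 1) ^ x + 2 ^ y = (2 ^ k + 1) ^ z) : y = k := by
  have ha : (2 ^ k - 1) ^ x ≡ 1 [MOD 2 ^ (k + 1)] := by
    simpa [Nat.even_iff.mp hx] using pow_modEq_pow_mod (two_pow_sub_one_sq_modEq_one hk) x
  have hc : (2 ^ k + 1) ^ z ≡ 1 + 2 ^ k [MOD 2 ^ (k + 1)] := by
    simpa [Nat.odd_iff.mp hz, add_comm] using
      pow_modEq_pow_mod (two_pow_add_one_sq_modEq_one hk) z
  exact eq_of_two_pow_modEq_two_pow le_rfl
    (((ha.add_right _).symm.trans (h ▸ hc)).add_left_cancel' 1)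

lemma eq_of_two_pow_sub_one_pow_add_two_pow_eq (hk2 : 2 ≤ k) (hk : k % 6 = 1) (hx : x ≠ 0)
    (hy : y ≠ 0) (hz : z ≠ 0) (h : (2 ^ k - 1) ^ x + 2 ^ y = (2 ^ k + 1) ^ z) :
    (x, y, z) = (1, 1, 1) ∨ (x, y, z) = (2, k + 2, 2) := by
  have h4 : 4 ≤ 2 ^ k := by simpa using Nat.pow_le_pow_right two_pos hk2
  rcases (by omega : z = 1 ∨ 2 ≤ z) with rfl | hz2
  · rw [pow_one] at h
    have hxa : 2 ^ k - 1 ≤ (2 ^ k - 1) ^ x := Nat.le_self_pow hx _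
    have hy2 : 2 ≤ 2 ^ y := Nat.le_self_pow hy 2
    have hx1 := (Nat.pow_eq_self_iff (by omega)).mp (by omega : (2 ^ k - 1) ^ x = 2 ^ k - 1)
    have hy1 := (Nat.pow_eq_self_iff one_lt_two).mp (by omega : 2 ^ y = 2)
    simp [hx1, hy1]
  have hy6 := mod_six_ne_one_of_two_pow_sub_one_pow_add_two_pow_eq hk hz2 h
  obtain ⟨X, rfl⟩ := even_of_two_pow_sub_one_pow_add_two_pow_eq hk2 (by omega) h
  obtain ⟨Z, rfl⟩ : Even z := by
    by_contra hodd
    have := eq_of_two_pow_sub_one_pow_add_two_pow_eq_of_odd (by omega) ⟨X, rfl⟩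
      (Nat.not_even_iff_odd.mp hodd) h
    omega
  rw [← two_mul, ← two_mul, pow_mul', pow_mul'] at h
  obtain ⟨t, ht, hc, rfl⟩ :=
    exists_two_pow_of_sq_add_two_pow_eq_sq ((odd_two_pow_sub_one (by omega)).pow) h
  obtain ⟨rfl, htk⟩ := eq_one_of_two_pow_sub_one_pow_add_one hk2 (by omega) ht
  subst t
  have hZ := (Nat.pow_eq_self_iff (by omega)).mp (by omega : (2 ^ k + 1) ^ Z = 2 ^ k + 1)
  simp [hZ]

def exponentialSolutions (a b c : ℕ) : Set (ℕ × ℕ × ℕ) :=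
  {p | 0 < p.1 ∧ 0 < p.2.1 ∧ 0 < p.2.2 ∧ a ^ p.1 + b ^ p.2.1 = c ^ p.2.2}

lemma exponentialSolutions_two_pow_sub_one (hk2 : 2 ≤ k) (hk : k % 6 = 1) :
    exponentialSolutions (2 ^ k - 1) 2 (2 ^ k + 1) = {(1, 1, 1), (2, k + 2, 2)} := by
  ext ⟨x, y, z⟩
  refine ⟨fun ⟨hx, hy, hz, h⟩ ↦
    eq_of_two_pow_sub_one_pow_add_two_pow_eq hk2 hk hx.ne' hy.ne' hz.ne' h, ?_⟩
  simp only [Set.mem_insert_iff, Set.mem_singleton_iff, Prod.mk.injEq]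
  rintro (⟨rfl, rfl, rfl⟩ | ⟨rfl, rfl, rfl⟩)
  · refine ⟨one_pos, one_pos, one_pos, ?_⟩
    zify [(Nat.one_le_two_pow : 1 ≤ 2 ^ k)]
    ring
  · refine ⟨two_pos, by simp, two_pos, ?_⟩
    zify [(Nat.one_le_two_pow : 1 ≤ 2 ^ k)]
    ring

end

/-- There are infinitely many triples `(a, b, c)` of integers with `a, b > 1`,
`gcd(a, b) = 1`, and `c` odd such that `a^x + b^y = c^z` has exactly two solutions in
positive integers `(x, y, z)`. -/
theorem infinitely_many_two_solution_triples :
    {t : ℕ × ℕ × ℕ | 1 < t.1 ∧ 1 < t.2.1 ∧ Nat.Coprime t.1 t.2.1 ∧ Odd t.2.2 ∧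
      {p : ℕ × ℕ × ℕ | 0 < p.1 ∧ 0 < p.2.1 ∧ 0 < p.2.2 ∧
        t.1 ^ p.1 + t.2.1 ^ p.2.1 = t.2.2 ^ p.2.2}.encard = 2}.Infinite := by
  refine Set.infinite_of_injective_forall_mem
    (f := fun j : ℕ ↦ (2 ^ (6 * j + 7) - 1, 2, 2 ^ (6 * j + 7) + 1)) ?_ fun j ↦ ?_
  · intro i j hij
    have := Nat.pow_right_injective le_rfl (Nat.add_right_cancel (congrArg (·.2.2) hij))
    omega
  have h4 : 4 ≤ 2 ^ (6 * j + 7) := by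
    simpa using Nat.pow_le_pow_right two_pos (by omega : 2 ≤ 6 * j + 7)
  refine ⟨by omega, one_lt_two, Nat.coprime_two_right.mpr (odd_two_pow_sub_one (by omega)),
    ((Nat.even_pow' (by omega)).mpr even_two).add_one, ?_⟩
  change (exponentialSolutions _ _ _).encard = 2
  rw [exponentialSolutions_two_pow_sub_one (by omega) (by omega)]
  exact Set.encard_pair (by simp)
end

section
/- Let a and b be relatively prime integers both greater than 1 and let c be an odd integer greater than 1. Then there exist two pairs (e1, f1) and (e2, f2) in (ℤ/2ℤ) × (ℤ/2ℤ) such that every solution in positive integers (x, y, z) to a^x + b^y = c^z satisfies (x mod 2, y mod 2) = (e1, f1) or (x mod 2, y mod 2) = (e2, f2). In other words, all solutions occur in at most two parity classes. -/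
/-!
Fix an odd prime `p ∣ c`. Coprimality makes `a` and `b` units mod `p`, and every solution gives
`a ^ x * (b⁻¹) ^ y = -1` in `(ZMod p)ˣ`. If three solutions lay in distinct parity classes, the
differences of their exponent vectors would have odd determinant `D`; by Cramer's rule `a ^ D` and
`b ^ D` are trivial, so `(-1) ^ D = 1` with `D` odd, which is impossible as `p ≠ 2`.
-/

theorem Set.exists_subset_pair_of_no_three_distinct {α : Type*} [Nonempty α] {s : Set α}
    (hs : ∀ u ∈ s, ∀ v ∈ s, ∀ w ∈ s, u ≠ v → u ≠ w → v ≠ w → False) :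
    ∃ u v, s ⊆ {u, v} := by
  by_cases hsub : s.Subsingleton
  · obtain rfl | ⟨u, rfl⟩ := hsub.eq_empty_or_singleton
    · exact ⟨Classical.arbitrary α, Classical.arbitrary α, Set.empty_subset _⟩
    · exact ⟨u, u, by simp⟩
  · obtain ⟨u, hu, v, hv, huv⟩ := Set.not_subsingleton_iff.mp hsub
    refine ⟨u, v, fun w hw => ?_⟩
    by_contra h
    simp only [Set.mem_insert_iff, Set.mem_singleton_iff, not_or] at h
    exact hs u hu v hv w hw huv (Ne.symm h.1) (Ne.symm h.2)

theorem odd_det_of_parity_classes_ne {x₁ y₁ x₂ y₂ x₃ y₃ : ℤ}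
    (h₁₂ : ((x₁ : ZMod 2), (y₁ : ZMod 2)) ≠ ((x₂ : ZMod 2), (y₂ : ZMod 2)))
    (h₁₃ : ((x₁ : ZMod 2), (y₁ : ZMod 2)) ≠ ((x₃ : ZMod 2), (y₃ : ZMod 2)))
    (h₂₃ : ((x₂ : ZMod 2), (y₂ : ZMod 2)) ≠ ((x₃ : ZMod 2), (y₃ : ZMod 2))) :
    Odd ((x₂ - x₁) * (y₃ - y₁) - (x₃ - x₁) * (y₂ - y₁)) := by
  rw [← ZMod.intCast_eq_one_iff_odd]
  push_cast
  -- two distinct nonzero vectors of `(ZMod 2)²` are linearly independent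
  generalize (x₁ : ZMod 2) = X₁, (y₁ : ZMod 2) = Y₁, (x₂ : ZMod 2) = X₂, (y₂ : ZMod 2) = Y₂,
    (x₃ : ZMod 2) = X₃, (y₃ : ZMod 2) = Y₃ at *
  revert X₁ Y₁ X₂ Y₂ X₃ Y₃
  decide

section CommGroup

variable {G : Type*} [CommGroup G]

theorem zpow_det_eq_one_left {g h : G} {d₁ e₁ d₂ e₂ : ℤ} (h₁ : g ^ d₁ * h ^ e₁ = 1)
    (h₂ : g ^ d₂ * h ^ e₂ = 1) : g ^ (d₁ * e₂ - d₂ * e₁) = 1 := by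
  have k₁ : g ^ (d₁ * e₂) * h ^ (e₁ * e₂) = 1 := by
    rw [zpow_mul, zpow_mul, ← mul_zpow, h₁, one_zpow]
  have k₂ : g ^ (d₂ * e₁) * h ^ (e₁ * e₂) = 1 := by
    rw [mul_comm e₁, zpow_mul, zpow_mul, ← mul_zpow, h₂, one_zpow]
  rw [zpow_sub, mul_inv_eq_one]
  exact mul_right_cancel (k₁.trans k₂.symm)

theorem zpow_det_eq_one_right {g h : G} {d₁ e₁ d₂ e₂ : ℤ} (h₁ : g ^ d₁ * h ^ e₁ = 1)
    (h₂ : g ^ d₂ * h ^ e₂ = 1) : h ^ (d₁ * e₂ - d₂ * e₁) = 1 := by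
  rw [mul_comm] at h₁ h₂
  rw [show d₁ * e₂ - d₂ * e₁ = -(e₁ * d₂ - e₂ * d₁) by ring, zpow_neg,
    zpow_det_eq_one_left h₁ h₂, inv_one]

theorem exists_odd_zpow_eq_one_of_three_parity_classes {g h t : G} {x₁ y₁ x₂ y₂ x₃ y₃ : ℤ}
    (ht₁ : g ^ x₁ * h ^ y₁ = t) (ht₂ : g ^ x₂ * h ^ y₂ = t) (ht₃ : g ^ x₃ * h ^ y₃ = t)
    (h₁₂ : ((x₁ : ZMod 2), (y₁ : ZMod 2)) ≠ ((x₂ : ZMod 2), (y₂ : ZMod 2)))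
    (h₁₃ : ((x₁ : ZMod 2), (y₁ : ZMod 2)) ≠ ((x₃ : ZMod 2), (y₃ : ZMod 2)))
    (h₂₃ : ((x₂ : ZMod 2), (y₂ : ZMod 2)) ≠ ((x₃ : ZMod 2), (y₃ : ZMod 2))) :
    ∃ n : ℤ, Odd n ∧ t ^ n = 1 := by
  have rel : ∀ {x y : ℤ}, g ^ x * h ^ y = t → g ^ (x - x₁) * h ^ (y - y₁) = 1 := by
    intro x y hxy
    rw [zpow_sub, zpow_sub, mul_mul_mul_comm, ← mul_inv, hxy, ht₁, mul_inv_cancel]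
  have hg := zpow_det_eq_one_left (rel ht₂) (rel ht₃)
  have hh := zpow_det_eq_one_right (rel ht₂) (rel ht₃)
  refine ⟨_, odd_det_of_parity_classes_ne h₁₂ h₁₃ h₂₃, ?_⟩
  rw [← ht₁, mul_zpow, ← zpow_mul, ← zpow_mul, mul_comm x₁, mul_comm y₁, zpow_mul, zpow_mul,
    hg, hh, one_zpow, one_zpow, one_mul]

end CommGroup

theorem false_of_pow_eq_neg_pow_of_three_parity_classes {M : Type*} [CommMonoid M]
    [HasDistribNeg M] (hM : (-1 : M) ≠ 1) {u v : M} (hu : IsUnit u) (hv : IsUnit v)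
    {x₁ y₁ x₂ y₂ x₃ y₃ : ℕ} (e₁ : u ^ x₁ = -v ^ y₁) (e₂ : u ^ x₂ = -v ^ y₂)
    (e₃ : u ^ x₃ = -v ^ y₃)
    (h₁₂ : ((x₁ : ZMod 2), (y₁ : ZMod 2)) ≠ ((x₂ : ZMod 2), (y₂ : ZMod 2)))
    (h₁₃ : ((x₁ : ZMod 2), (y₁ : ZMod 2)) ≠ ((x₃ : ZMod 2), (y₃ : ZMod 2)))
    (h₂₃ : ((x₂ : ZMod 2), (y₂ : ZMod 2)) ≠ ((x₃ : ZMod 2), (y₃ : ZMod 2))) : False := by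
  lift u to Mˣ using hu
  lift v to Mˣ using hv
  have unit_eq : ∀ {x y : ℕ}, (u : M) ^ x = -(v : M) ^ y →
      u ^ (x : ℤ) * v⁻¹ ^ (y : ℤ) = -1 := by
    intro x y hxy
    rw [zpow_natCast, zpow_natCast, inv_pow, mul_inv_eq_iff_eq_mul, neg_one_mul]
    exact Units.ext (by push_cast; exact hxy)
  obtain ⟨n, hn, hn1⟩ := exists_odd_zpow_eq_one_of_three_parity_classes
    (unit_eq e₁) (unit_eq e₂) (unit_eq e₃)
    (by simpa using h₁₂) (by simpa using h₁₃) (by simpa using h₂₃)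
  rw [hn.neg_one_zpow] at hn1
  exact hM (by simpa using congrArg Units.val hn1)

theorem ZMod.isUnit_and_pow_eq_neg_pow_of_add_pow_eq {p a b c x y z : ℕ} [Fact p.Prime]
    (hpc : p ∣ c) (hab : a.Coprime b) (hx : 0 < x) (hy : 0 < y) (hz : 0 < z)
    (h : a ^ x + b ^ y = c ^ z) :
    IsUnit (a : ZMod p) ∧ IsUnit (b : ZMod p) ∧ (a : ZMod p) ^ x = -(b : ZMod p) ^ y := by
  have hp : p.Prime := Fact.out
  have hdvd : p ∣ a ^ x + b ^ y := h ▸ dvd_pow hpc hz.ne'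
  have hpa : ¬ p ∣ a := fun hpa => hp.ne_one <| Nat.eq_one_of_dvd_coprimes hab hpa <|
    hp.dvd_of_dvd_pow ((Nat.dvd_add_right (dvd_pow hpa hx.ne')).1 hdvd)
  have hpb : ¬ p ∣ b := fun hpb => hp.ne_one <| Nat.eq_one_of_dvd_coprimes hab
    (hp.dvd_of_dvd_pow ((Nat.dvd_add_left (dvd_pow hpb hy.ne')).1 hdvd)) hpb
  refine ⟨isUnit_iff_ne_zero.2 (mt (ZMod.natCast_eq_zero_iff a p).1 hpa),
    isUnit_iff_ne_zero.2 (mt (ZMod.natCast_eq_zero_iff b p).1 hpb),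
    eq_neg_of_add_eq_zero_left ?_⟩
  exact_mod_cast (ZMod.natCast_eq_zero_iff _ p).2 hdvd

def solutionParityClasses (a b c : ℕ) : Set (ZMod 2 × ZMod 2) :=
  {q | ∃ x y z : ℕ, 0 < x ∧ 0 < y ∧ 0 < z ∧ a ^ x + b ^ y = c ^ z ∧
    q = ((x : ZMod 2), (y : ZMod 2))}

theorem at_most_two_parity_classes_general (a b c : ℕ)
    (hab : Nat.Coprime a b) (hc : 1 < c) (hcodd : Odd c) :
    ∃ e₁ f₁ e₂ f₂ : ZMod 2, ∀ x y z : ℕ, 0 < x → 0 < y → 0 < z →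
      a ^ x + b ^ y = c ^ z →
      ((x : ZMod 2), (y : ZMod 2)) = (e₁, f₁) ∨ ((x : ZMod 2), (y : ZMod 2)) = (e₂, f₂) := by
  obtain ⟨p, hp, hpc⟩ := Nat.exists_prime_and_dvd hc.ne'
  have hp_odd : Odd p := hcodd.of_dvd_nat hpc
  have : Fact p.Prime := ⟨hp⟩
  have : Fact (2 < p) := ⟨hp.two_le.lt_of_ne (by rintro rfl; exact absurd hp_odd (by decide))⟩
  have no_three : ∀ u ∈ solutionParityClasses a b c, ∀ v ∈ solutionParityClasses a b c,
      ∀ w ∈ solutionParityClasses a b c, u ≠ v → u ≠ w → v ≠ w → False := by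
    rintro _ ⟨x₁, y₁, z₁, hx₁, hy₁, hz₁, h₁, rfl⟩ _ ⟨x₂, y₂, z₂, hx₂, hy₂, hz₂, h₂, rfl⟩
      _ ⟨x₃, y₃, z₃, hx₃, hy₃, hz₃, h₃, rfl⟩ h₁₂ h₁₃ h₂₃
    obtain ⟨ha, hb, e₁⟩ :=
      ZMod.isUnit_and_pow_eq_neg_pow_of_add_pow_eq (p := p) hpc hab hx₁ hy₁ hz₁ h₁
    obtain ⟨-, -, e₂⟩ :=
      ZMod.isUnit_and_pow_eq_neg_pow_of_add_pow_eq (p := p) hpc hab hx₂ hy₂ hz₂ h₂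
    obtain ⟨-, -, e₃⟩ :=
      ZMod.isUnit_and_pow_eq_neg_pow_of_add_pow_eq (p := p) hpc hab hx₃ hy₃ hz₃ h₃
    exact false_of_pow_eq_neg_pow_of_three_parity_classes ZMod.neg_one_ne_one ha hb e₁ e₂ e₃
      h₁₂ h₁₃ h₂₃
  obtain ⟨u, v, hS⟩ := Set.exists_subset_pair_of_no_three_distinct no_three
  exact ⟨u.1, u.2, v.1, v.2, fun x y z hx hy hz h => hS ⟨x, y, z, hx, hy, hz, h, rfl⟩⟩

/-- Let `a` and `b` be relatively prime integers both greater than 1 and let `c` be an odd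
integer greater than 1. Then all solutions in positive integers of `a^x + b^y = c^z` occur
in at most two parity classes `(x mod 2, y mod 2)`. -/
theorem at_most_two_parity_classes (a b c : ℕ) (ha : 1 < a) (hb : 1 < b)
    (hab : Nat.Coprime a b) (hc : 1 < c) (hcodd : Odd c) :
    ∃ e₁ f₁ e₂ f₂ : ZMod 2, ∀ x y z : ℕ, 0 < x → 0 < y → 0 < z →
      a ^ x + b ^ y = c ^ z →
      ((x : ZMod 2), (y : ZMod 2)) = (e₁, f₁) ∨ ((x : ZMod 2), (y : ZMod 2)) = (e₂, f₂) :=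
  at_most_two_parity_classes_general a b c hab hc hcodd
end

section
/- Let p be an odd prime and let a and b be integers not divisible by p. Then there exist two pairs (e1, f1) and (e2, f2) in (ℤ/2ℤ) × (ℤ/2ℤ) such that every pair of positive integers (x, y) with a^x ≡ -b^y (mod p) satisfies (x mod 2, y mod 2) = (e1, f1) or (x mod 2, y mod 2) = (e2, f2). -/
/-!
Let `A`, `B` be the classes of `a`, `b` in `(ZMod p)ˣ`, so that the solutions are the `(x, y)` with
`A ^ x = -B ^ y`. Two solutions with the same parity of `y` but different parities of `x` give
`A ^ odd = B ^ even`; two with the same parity of `x` but different parities of `y` make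
`B ^ odd` a power of `A`. Together these force `A ^ k = B ^ k = 1` for an odd `k`, and then
`-1 = A ^ x * B ^ (-y)` would have odd order, which is impossible as `p` is odd.
Hence on the solutions one parity determines the other, which leaves at most two classes.
-/

open Set

theorem exists_eq_or_eq_of_injOn_zmod_two {α : Type*} [Nonempty α] {T : Set α}
    {f : α → ZMod 2} (hf : InjOn f T) : ∃ q₁ q₂ : α, ∀ q ∈ T, q = q₁ ∨ q = q₂ := by
  refine ⟨Function.invFunOn f T 0, Function.invFunOn f T 1, fun q hq => ?_⟩
  have hq' : q = Function.invFunOn f T (f q) := (hf.leftInvOn_invFunOn hq).symm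
  generalize f q = i at hq'
  fin_cases i
  exacts [.inl hq', .inr hq']

theorem ZMod.natCast_eq_natCast_iff_even_sub (x y : ℕ) :
    (x : ZMod 2) = y ↔ Even ((x : ℤ) - y) := by
  rw [← ZMod.intCast_eq_zero_iff_even, Int.cast_sub, Int.cast_natCast, Int.cast_natCast, sub_eq_zero]

section
variable {G : Type*} [CommGroup G] {A B c : G}

theorem exists_odd_zpow_eq_one_of_zpow_eq_zpow {x y x' y' : ℤ} (hx : Odd x) (hy : Even y)
    (hy' : Odd y') (h : A ^ x = B ^ y) (h' : B ^ y' = A ^ x') :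
    ∃ k : ℤ, Odd k ∧ A ^ k = 1 ∧ B ^ k = 1 := by
  refine ⟨x * y' - y * x', hx.mul hy' |>.sub_even (hy.mul_right x'), ?_, ?_⟩
  · rw [zpow_sub, mul_inv_eq_one]
    calc A ^ (x * y') = B ^ (y * y') := by rw [zpow_mul, h, ← zpow_mul]
      _ = A ^ (y * x') := by rw [mul_comm, zpow_mul, h', ← zpow_mul, mul_comm]
  · rw [zpow_sub, mul_inv_eq_one]
    calc B ^ (x * y') = A ^ (x * x') := by rw [mul_comm, zpow_mul, h', ← zpow_mul, mul_comm]
      _ = B ^ (y * x') := by rw [zpow_mul, h, ← zpow_mul]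

theorem eq_one_of_sq_eq_one_of_zpow_odd_eq_one {k : ℤ} (hc : c ^ 2 = 1) (hk : Odd k)
    (hck : c ^ k = 1) : c = 1 := by
  obtain ⟨j, rfl⟩ := hk
  rwa [zpow_add_one, zpow_mul, zpow_two, ← sq, hc, one_zpow, one_mul] at hck

theorem zpow_sub_eq_zpow_sub_of_eq_mul {x y x' y' : ℕ} (h : A ^ x = c * B ^ y)
    (h' : A ^ x' = c * B ^ y') : A ^ ((x : ℤ) - x') = B ^ ((y : ℤ) - y') := by
  rw [zpow_sub, zpow_sub, ← div_eq_mul_inv, ← div_eq_mul_inv]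
  simp only [zpow_natCast, h, h', mul_div_mul_left_eq_div]

theorem zpow_eq_one_of_pow_eq_mul_pow {x y : ℕ} {k : ℤ} (h : A ^ x = c * B ^ y)
    (hA : A ^ k = 1) (hB : B ^ k = 1) : c ^ k = 1 := by
  rw [eq_mul_inv_of_mul_eq h.symm, mul_zpow, inv_zpow, ← zpow_natCast A, ← zpow_natCast B,
    ← zpow_mul, ← zpow_mul, zpow_mul' A, zpow_mul' B, hA, hB, one_zpow, one_zpow, inv_one, mul_one]

def parityClasses (A B c : G) : Set (ZMod 2 × ZMod 2) :=
  {q | ∃ x y : ℕ, A ^ x = c * B ^ y ∧ ((x : ZMod 2), (y : ZMod 2)) = q}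

theorem injOn_fst_or_injOn_snd_parityClasses (hc2 : c ^ 2 = 1) (hc : c ≠ 1) :
    InjOn Prod.fst (parityClasses A B c) ∨ InjOn Prod.snd (parityClasses A B c) := by
  refine or_iff_not_imp_left.mpr fun hfst => ?_
  rintro _ ⟨x₁, y₁, h₁, rfl⟩ _ ⟨x₂, y₂, h₂, rfl⟩ (hy : (y₁ : ZMod 2) = y₂)
  refine Prod.ext (not_not.mp fun hx => hfst ?_) hy
  rintro _ ⟨x₃, y₃, h₃, rfl⟩ _ ⟨x₄, y₄, h₄, rfl⟩ (hx' : (x₃ : ZMod 2) = x₄)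
  refine Prod.ext hx' (not_not.mp fun hy' => hc ?_)
  rw [ZMod.natCast_eq_natCast_iff_even_sub, Int.not_even_iff_odd] at hx hy'
  rw [ZMod.natCast_eq_natCast_iff_even_sub] at hy
  obtain ⟨k, hk, hAk, hBk⟩ := exists_odd_zpow_eq_one_of_zpow_eq_zpow hx hy hy'
    (zpow_sub_eq_zpow_sub_of_eq_mul h₁ h₂) (zpow_sub_eq_zpow_sub_of_eq_mul h₃ h₄).symm
  exact eq_one_of_sq_eq_one_of_zpow_odd_eq_one hc2 hk (zpow_eq_one_of_pow_eq_mul_pow h₁ hAk hBk)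

theorem exists_two_parity_classes_of_pow_eq_mul_pow (hc2 : c ^ 2 = 1) (hc : c ≠ 1) :
    ∃ e₁ f₁ e₂ f₂ : ZMod 2, ∀ x y : ℕ, A ^ x = c * B ^ y →
      ((x : ZMod 2), (y : ZMod 2)) = (e₁, f₁) ∨ ((x : ZMod 2), (y : ZMod 2)) = (e₂, f₂) := by
  obtain ⟨q₁, q₂, h⟩ := (injOn_fst_or_injOn_snd_parityClasses hc2 hc).elim
    exists_eq_or_eq_of_injOn_zmod_two exists_eq_or_eq_of_injOn_zmod_two
  exact ⟨q₁.1, q₁.2, q₂.1, q₂.2, fun x y hxy => h _ ⟨x, y, hxy, rfl⟩⟩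

end

/-- Let `p` be an odd prime and let `a` and `b` be integers not divisible by `p`. Then
there are at most two parity classes `(x mod 2, y mod 2)` of pairs of positive integers
`(x, y)` with `a^x ≡ -b^y (mod p)`. -/
theorem congruence_two_parity_classes (p : ℕ) (hp : p.Prime) (hpodd : Odd p)
    (a b : ℤ) (ha : ¬ (p : ℤ) ∣ a) (hb : ¬ (p : ℤ) ∣ b) :
    ∃ e₁ f₁ e₂ f₂ : ZMod 2, ∀ x y : ℕ, 0 < x → 0 < y →
      a ^ x ≡ -(b ^ y) [ZMOD p] →
      ((x : ZMod 2), (y : ZMod 2)) = (e₁, f₁) ∨ ((x : ZMod 2), (y : ZMod 2)) = (e₂, f₂) := by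
  have : Fact p.Prime := ⟨hp⟩
  have : Fact (2 < p) := ⟨by have := hp.two_le; rcases hpodd with ⟨k, rfl⟩; omega⟩
  have hA : (a : ZMod p) ≠ 0 := by rwa [Ne, ZMod.intCast_zmod_eq_zero_iff_dvd]
  have hB : (b : ZMod p) ≠ 0 := by rwa [Ne, ZMod.intCast_zmod_eq_zero_iff_dvd]
  obtain ⟨e₁, f₁, e₂, f₂, h⟩ :=
    exists_two_parity_classes_of_pow_eq_mul_pow (A := Units.mk0 _ hA) (B := Units.mk0 _ hB)
      (neg_one_sq : (-1 : (ZMod p)ˣ) ^ 2 = 1) (fun h => ZMod.neg_one_ne_one (congrArg Units.val h))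
  refine ⟨e₁, f₁, e₂, f₂, fun x y _ _ hxy => h x y (Units.ext ?_)⟩
  have hmod := (ZMod.intCast_eq_intCast_iff _ _ _).mpr hxy
  push_cast at hmod
  simpa using hmod
end

section
/- Let m be a positive even integer and let r and s be integers. Then there exist two pairs (e1, f1) and (e2, f2) in (ℤ/2ℤ) × (ℤ/2ℤ) such that every pair of integers (x, y) satisfying r*x ≡ m/2 + s*y (mod m) has (x mod 2, y mod 2) equal to (e1, f1) or (e2, f2). -/
/-!
Reducing the congruence modulo 2 gives `r x ≡ m/2 + s y`. If `r` or `s` is odd this is a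
nontrivial affine equation over `ZMod 2`, whose solution set is a line of two points. If `r`
and `s` are both even, either `m/2` is odd and there are no solutions at all, or the whole
congruence can be divided by 2, which halves `m` and lets us descend.
-/

theorem ZMod.exists_two_points_of_add_mul_eq (a b c : ZMod 2) (hab : a ≠ 0 ∨ b ≠ 0) :
    ∃ e₁ f₁ e₂ f₂ : ZMod 2, ∀ x y : ZMod 2,
      a * x + b * y = c → (x, y) = (e₁, f₁) ∨ (x, y) = (e₂, f₂) := by
  revert a b c
  decide

theorem Int.ModEq.zmod_two_cast {m r s n x y : ℤ} (hm : 2 ∣ m)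
    (h : r * x ≡ n + s * y [ZMOD m]) :
    (r : ZMod 2) * x = n + s * y := by
  exact_mod_cast (ZMod.intCast_eq_intCast_iff _ _ 2).mpr (h.of_dvd hm)

theorem exists_zmod_two_relation_of_modEq (n : ℕ) (hn : 0 < n) (r s : ℤ) :
    ∃ a b c : ZMod 2, (a ≠ 0 ∨ b ≠ 0) ∧ ∀ x y : ℤ,
      r * x ≡ n + s * y [ZMOD 2 * n] → a * x + b * y = c := by
  induction n using Nat.strong_induction_on generalizing r s with
  | _ n ih =>
  have hsol : ∀ x y : ℤ, r * x ≡ n + s * y [ZMOD 2 * n] →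
      (r : ZMod 2) * x + (-s : ℤ) * y = n := fun x y h => by
    have h₂ := h.zmod_two_cast (dvd_mul_right 2 _)
    rw [Int.cast_natCast] at h₂
    push_cast
    linear_combination h₂
  by_cases hrs : ((r : ZMod 2) ≠ 0 ∨ ((-s : ℤ) : ZMod 2) ≠ 0)
  · exact ⟨_, _, _, hrs, hsol⟩
  push Not at hrs
  obtain ⟨hr, hs⟩ := hrs
  obtain ⟨r', rfl⟩ := (ZMod.intCast_zmod_eq_zero_iff_dvd r 2).mp hr
  obtain ⟨s', rfl⟩ := dvd_neg.mp ((ZMod.intCast_zmod_eq_zero_iff_dvd _ 2).mp hs)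
  rcases Nat.even_or_odd n with ⟨n', rfl⟩ | ⟨k, rfl⟩
  · obtain ⟨a, b, c, hab, hrel⟩ := ih n' (by omega) (by omega) r' s'
    refine ⟨a, b, c, hab, fun x y h => hrel x y (Int.ModEq.mul_left_cancel' two_ne_zero ?_)⟩
    convert h using 1 <;> push_cast <;> ring
  · refine ⟨1, 0, 0, Or.inl one_ne_zero, fun x y h => absurd (hsol x y h) ?_⟩
    rw [hr, hs]
    push_cast
    reduce_mod_char
    decide

/-- Let `m` be a positive even integer and let `r` and `s` be integers. Then the pairs of
integers `(x, y)` satisfying `r*x ≡ m/2 + s*y (mod m)` occur in at most two parity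
classes `(x mod 2, y mod 2)`. -/
theorem linear_congruence_two_parity_classes (m : ℤ) (hm : 0 < m) (hmeven : Even m)
    (r s : ℤ) :
    ∃ e₁ f₁ e₂ f₂ : ZMod 2, ∀ x y : ℤ, r * x ≡ m / 2 + s * y [ZMOD m] →
      ((x : ZMod 2), (y : ZMod 2)) = (e₁, f₁) ∨ ((x : ZMod 2), (y : ZMod 2)) = (e₂, f₂) := by
  obtain ⟨n, rfl⟩ := hmeven
  lift n to ℕ using by omega
  have hhalf : ((n : ℤ) + n) / 2 = n := by omega
  obtain ⟨a, b, c, hab, hrel⟩ := exists_zmod_two_relation_of_modEq n (by omega) r s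
  obtain ⟨e₁, f₁, e₂, f₂, hpts⟩ := ZMod.exists_two_points_of_add_mul_eq a b c hab
  refine ⟨e₁, f₁, e₂, f₂, fun x y h => hpts x y (hrel x y ?_)⟩
  rwa [hhalf, ← two_mul] at h
end

section
/- Let a and b be relatively prime integers both greater than 1 and let c be an odd integer greater than 1. Suppose the equation a^x + b^y = c^z has two solutions in positive integers (x1, y1, z1) and (x2, y2, z2) that lie in different parity classes (i.e., x1 ≢ x2 (mod 2) or y1 ≢ y2 (mod 2)). Then there exists g ∈ {a, b} such that the multiplicative order u of g modulo c is even and g^(u/2) ≡ -1 (mod c). -/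
/-!
Modulo `c` every solution gives `a ^ x = -b ^ y`. Raising the relations of two solutions to the
powers `x₂` and `x₁` eliminates `a`; if `x₁` and `x₂` have different parity, what remains shows
that `-1` is a power of the unit `b` (symmetrically, `-1` is a power of `a` if the `y`'s differ).
An element of order two among the powers of `b` can only be `b ^ (u / 2)` with `u` even.
-/

section CommMonoid

variable {M : Type*} [CommMonoid M] {A B ε : M}

lemma exists_pow_eq_mul_pow_of_mod_two_ne {x₁ y₁ x₂ y₂ : ℕ} (hε : ε ^ 2 = 1)
    (h₁ : A ^ x₁ = ε * B ^ y₁) (h₂ : A ^ x₂ = ε * B ^ y₂) (hx : x₁ % 2 ≠ x₂ % 2) :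
    ∃ p q : ℕ, B ^ p = ε * B ^ q := by
  have hcross : ε ^ (x₂ % 2) * B ^ (y₁ * x₂) = ε ^ (x₁ % 2) * B ^ (y₂ * x₁) := by
    rw [← pow_eq_pow_mod _ hε, ← pow_eq_pow_mod _ hε, pow_mul, pow_mul, ← mul_pow, ← mul_pow,
      ← h₁, ← h₂, ← pow_mul, ← pow_mul, mul_comm]
  rcases Nat.mod_two_eq_zero_or_one x₁ with h | h
  · rw [h, show x₂ % 2 = 1 by omega, pow_zero, pow_one, one_mul] at hcross
    exact ⟨_, _, hcross.symm⟩
  · rw [h, show x₂ % 2 = 0 by omega, pow_zero, pow_one, one_mul] at hcross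
    exact ⟨_, _, hcross⟩

end CommMonoid

section Monoid

variable {M : Type*} [Monoid M] {B ε : M}

lemma IsOfFinOrder.exists_pow_eq_of_pow_eq_mul_pow (hB : IsOfFinOrder B) {p q : ℕ}
    (h : B ^ p = ε * B ^ q) : ∃ k : ℕ, B ^ k = ε := by
  refine ⟨p + (orderOf B - 1) * q, ?_⟩
  have hu : q + (orderOf B - 1) * q = orderOf B * q := by
    rw [Nat.sub_one_mul, Nat.add_sub_cancel' (Nat.le_mul_of_pos_left q hB.orderOf_pos)]
  rw [pow_add, h, mul_assoc, ← pow_add, hu, pow_mul, pow_orderOf_eq_one, one_pow, mul_one]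

/-- Reducing `k` modulo `u = orderOf B` gives `B ^ r = ε` with `0 < r < u` and `u ∣ 2 * r`,
which forces `u = 2 * r`. -/
lemma even_orderOf_and_pow_half_eq_of_pow_eq {k : ℕ} (hk : B ^ k = ε) (hε : ε ^ 2 = 1)
    (hε₁ : ε ≠ 1) : Even (orderOf B) ∧ B ^ (orderOf B / 2) = ε := by
  set u := orderOf B
  have hr : B ^ (k % u) = ε := by rw [pow_mod_orderOf, hk]
  have hr₀ : k % u ≠ 0 := fun h ↦ hε₁ (by rw [← hr, h, pow_zero])
  have hdvd : u ∣ 2 * (k % u) := orderOf_dvd_of_pow_eq_one (by rw [pow_mul', hr, hε])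
  have hlt : k % u < u := Nat.mod_lt _ (Nat.pos_of_dvd_of_pos hdvd (by omega))
  obtain ⟨t, ht⟩ := hdvd
  have ht₁ : t = 1 := by
    rcases Nat.lt_or_ge t 2 with h | h
    · interval_cases t <;> omega
    · nlinarith
  subst ht₁
  refine ⟨⟨k % u, by omega⟩, ?_⟩
  rw [show u / 2 = k % u by omega, hr]

end Monoid

lemma even_orderOf_and_pow_half_eq_of_mod_two_ne {M : Type*} [CommMonoid M] {A B ε : M}
    {x₁ y₁ x₂ y₂ : ℕ} (hB : IsOfFinOrder B) (hε : ε ^ 2 = 1) (hε₁ : ε ≠ 1)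
    (h₁ : A ^ x₁ = ε * B ^ y₁) (h₂ : A ^ x₂ = ε * B ^ y₂) (hx : x₁ % 2 ≠ x₂ % 2) :
    Even (orderOf B) ∧ B ^ (orderOf B / 2) = ε := by
  obtain ⟨p, q, hpq⟩ := exists_pow_eq_mul_pow_of_mod_two_ne hε h₁ h₂ hx
  obtain ⟨k, hk⟩ := hB.exists_pow_eq_of_pow_eq_mul_pow hpq
  exact even_orderOf_and_pow_half_eq_of_pow_eq hk hε hε₁

lemma Nat.Coprime.coprime_of_add_pow_eq_pow {a b c x y z : ℕ} (hab : Nat.Coprime a b)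
    (hy : 0 < y) (hz : 0 < z) (h : a ^ x + b ^ y = c ^ z) : Nat.Coprime b c := by
  have hbcz : Nat.Coprime b (c ^ z) := by
    rw [← h, ← Nat.sub_add_cancel hy, pow_succ, Nat.coprime_add_mul_right_right]
    exact hab.symm.pow_right x
  exact (Nat.coprime_pow_right_iff hz b c).1 hbcz

lemma ZMod.natCast_pow_eq_neg_one_mul_of_add_pow_eq_pow {a b c x y z : ℕ} (hz : 0 < z)
    (h : a ^ x + b ^ y = c ^ z) : (a : ZMod c) ^ x = -1 * (b : ZMod c) ^ y := by
  have h' := congrArg (Nat.cast : ℕ → ZMod c) h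
  push_cast at h'
  rw [ZMod.natCast_self, zero_pow hz.ne'] at h'
  linear_combination h'

theorem different_parity_classes_order_general (a b c : ℕ)
    (hab : Nat.Coprime a b) (hc : 1 < c) (hcodd : Odd c)
    (x₁ y₁ z₁ x₂ y₂ z₂ : ℕ) (hx₁ : 0 < x₁) (hy₁ : 0 < y₁) (hz₁ : 0 < z₁)
    (hz₂ : 0 < z₂)
    (heq₁ : a ^ x₁ + b ^ y₁ = c ^ z₁) (heq₂ : a ^ x₂ + b ^ y₂ = c ^ z₂)
    (hpar : ¬ (x₁ % 2 = x₂ % 2 ∧ y₁ % 2 = y₂ % 2)) :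
    ∃ g : ℕ, (g = a ∨ g = b) ∧ Even (orderOf (g : ZMod c)) ∧
      (g : ZMod c) ^ (orderOf (g : ZMod c) / 2) = -1 := by
  have : Fact (2 < c) := ⟨by obtain ⟨k, rfl⟩ := hcodd; omega⟩
  have hε : (-1 : ZMod c) ^ 2 = 1 := neg_one_sq
  have hfin : ∀ g : ℕ, Nat.Coprime g c → IsOfFinOrder (g : ZMod c) :=
    fun g hg ↦ ((ZMod.isUnit_iff_coprime g c).2 hg).isOfFinOrder
  have heq₁' : b ^ y₁ + a ^ x₁ = c ^ z₁ := by rw [add_comm, heq₁]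
  have heq₂' : b ^ y₂ + a ^ x₂ = c ^ z₂ := by rw [add_comm, heq₂]
  rcases not_and_or.1 hpar with hx | hy
  · exact ⟨b, Or.inr rfl, even_orderOf_and_pow_half_eq_of_mod_two_ne
      (hfin b (hab.coprime_of_add_pow_eq_pow hy₁ hz₁ heq₁)) hε ZMod.neg_one_ne_one
      (ZMod.natCast_pow_eq_neg_one_mul_of_add_pow_eq_pow hz₁ heq₁)
      (ZMod.natCast_pow_eq_neg_one_mul_of_add_pow_eq_pow hz₂ heq₂) hx⟩
  · exact ⟨a, Or.inl rfl, even_orderOf_and_pow_half_eq_of_mod_two_ne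
      (hfin a (hab.symm.coprime_of_add_pow_eq_pow hx₁ hz₁ heq₁')) hε ZMod.neg_one_ne_one
      (ZMod.natCast_pow_eq_neg_one_mul_of_add_pow_eq_pow hz₁ heq₁')
      (ZMod.natCast_pow_eq_neg_one_mul_of_add_pow_eq_pow hz₂ heq₂') hy⟩

/-- Suppose `a^x + b^y = c^z` has two positive solutions in different parity classes.
Then for some `g ∈ {a, b}`, the multiplicative order `u` of `g` modulo `c` is even and
`g^(u/2) ≡ -1 (mod c)`. -/
theorem different_parity_classes_order (a b c : ℕ) (ha : 1 < a) (hb : 1 < b)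
    (hab : Nat.Coprime a b) (hc : 1 < c) (hcodd : Odd c)
    (x₁ y₁ z₁ x₂ y₂ z₂ : ℕ) (hx₁ : 0 < x₁) (hy₁ : 0 < y₁) (hz₁ : 0 < z₁)
    (hx₂ : 0 < x₂) (hy₂ : 0 < y₂) (hz₂ : 0 < z₂)
    (heq₁ : a ^ x₁ + b ^ y₁ = c ^ z₁) (heq₂ : a ^ x₂ + b ^ y₂ = c ^ z₂)
    (hpar : ¬ (x₁ % 2 = x₂ % 2 ∧ y₁ % 2 = y₂ % 2)) :
    ∃ g : ℕ, (g = a ∨ g = b) ∧ Even (orderOf (g : ZMod c)) ∧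
      (g : ZMod c) ^ (orderOf (g : ZMod c) / 2) = -1 :=
  different_parity_classes_order_general a b c hab hc hcodd x₁ y₁ z₁ x₂ y₂ z₂ hx₁ hy₁ hz₁ hz₂ heq₁
    heq₂ hpar
end

section
/- Let a and b be relatively prime integers both greater than 1 and let c be an odd integer greater than 1. Suppose the equation a^x + b^y = c^z has two solutions in positive integers (x1, y1, z1) and (x2, y2, z2) with y1 odd and y2 even. Then the multiplicative order u of a modulo c is even and a^(u/2) ≡ -1 (mod c). -/
/-!
Reducing the two equations modulo `c` gives `a ^ x₁ = -b ^ y₁` and `a ^ x₂ = -b ^ y₂` in `ZMod c`.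
Raising them to the powers `y₂` and `y₁` respectively and comparing, the parities of `y₁` and `y₂`
give `a ^ (x₁ y₂) = -a ^ (x₂ y₁)`. As `a` is a unit modulo `c`, some power of `a` is `-1`, and
since `-1 ≠ 1` for odd `c > 1`, the order of `a` is even and its half-power is `-1`.
-/

section Monoid

variable {M : Type*} [Monoid M] {g m : M}

theorem pow_eq_of_pow_eq_mul_pow (hg : IsOfFinOrder g) {i j : ℕ} (h : g ^ i = m * g ^ j) :
    g ^ (i + j * (orderOf g - 1)) = m := by
  have hexp : j + j * (orderOf g - 1) = orderOf g * j := by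
    obtain ⟨n, hn⟩ := Nat.exists_eq_add_one_of_ne_zero hg.orderOf_pos.ne'
    rw [hn, Nat.add_sub_cancel]
    ring
  rw [pow_add, h, mul_assoc, ← pow_add, hexp, pow_mul, pow_orderOf_eq_one, one_pow, mul_one]

/-- The least exponent `r` with `g ^ r = m` satisfies `orderOf g ∣ 2 * r` and
`0 < r < orderOf g`, which forces `2 * r = orderOf g`. -/
theorem even_orderOf_and_pow_orderOf_div_two_eq (hm : m ^ 2 = 1) (hm1 : m ≠ 1) {k : ℕ}
    (hk : g ^ k = m) : Even (orderOf g) ∧ g ^ (orderOf g / 2) = m := by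
  have hk0 : k ≠ 0 := by
    rintro rfl
    exact hm1 (by rw [← hk, pow_zero])
  have hfin : IsOfFinOrder g :=
    isOfFinOrder_iff_pow_eq_one.mpr ⟨2 * k, by omega, by rw [pow_mul', hk, hm]⟩
  set n := orderOf g
  have hr : g ^ (k % n) = m := by rw [pow_mod_orderOf, hk]
  have hr0 : k % n ≠ 0 := fun h => hm1 (by rw [← hr, h, pow_zero])
  have hlt : k % n < n := Nat.mod_lt _ hfin.orderOf_pos
  have hdvd : n ∣ 2 * (k % n) := orderOf_dvd_of_pow_eq_one (by rw [pow_mul', hr, hm])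
  have htwo : 2 * (k % n) = n := Nat.eq_of_dvd_of_lt_two_mul (by omega) hdvd (by omega)
  exact ⟨⟨k % n, by omega⟩, by rw [show n / 2 = k % n by omega, hr]⟩

end Monoid

theorem Nat.Coprime.coprime_of_pow_add_pow_eq_pow {a b c x y z : ℕ} (hab : Nat.Coprime a b)
    (hx : 0 < x) (hz : 0 < z) (h : a ^ x + b ^ y = c ^ z) : Nat.Coprime a c := by
  rw [← Nat.coprime_pow_right_iff hz, ← h, ← Nat.sub_add_cancel hx, pow_succ', add_comm,
    Nat.coprime_add_mul_left_right]
  exact hab.pow_right y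

theorem ZMod.natCast_pow_eq_neg_of_pow_add_pow_eq_pow {a b c x y z : ℕ} (hz : 0 < z)
    (h : a ^ x + b ^ y = c ^ z) : (a : ZMod c) ^ x = -(b : ZMod c) ^ y := by
  have hcast := congrArg (Nat.cast : ℕ → ZMod c) h
  push_cast at hcast
  rw [ZMod.natCast_self, zero_pow hz.ne'] at hcast
  exact eq_neg_of_add_eq_zero_left hcast

theorem odd_even_y_order_a_general (a b c : ℕ)
    (hab : Nat.Coprime a b) (hc : 1 < c) (hcodd : Odd c)
    (x₁ y₁ z₁ x₂ y₂ z₂ : ℕ) (hx₁ : 0 < x₁) (hz₁ : 0 < z₁)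
    (hz₂ : 0 < z₂)
    (heq₁ : a ^ x₁ + b ^ y₁ = c ^ z₁) (heq₂ : a ^ x₂ + b ^ y₂ = c ^ z₂)
    (hodd : Odd y₁) (heven : Even y₂) :
    Even (orderOf (a : ZMod c)) ∧ (a : ZMod c) ^ (orderOf (a : ZMod c) / 2) = -1 := by
  have : Fact (2 < c) := ⟨by obtain ⟨k, rfl⟩ := hcodd; omega⟩
  have hfin : IsOfFinOrder (a : ZMod c) :=
    ((ZMod.isUnit_iff_coprime a c).mpr
      (hab.coprime_of_pow_add_pow_eq_pow hx₁ hz₁ heq₁)).isOfFinOrder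
  have key : (a : ZMod c) ^ (x₁ * y₂) = -1 * (a : ZMod c) ^ (x₂ * y₁) := by
    rw [pow_mul, pow_mul, ZMod.natCast_pow_eq_neg_of_pow_add_pow_eq_pow hz₁ heq₁,
      ZMod.natCast_pow_eq_neg_of_pow_add_pow_eq_pow hz₂ heq₂, heven.neg_pow, hodd.neg_pow,
      ← pow_mul, ← pow_mul, mul_comm y₁]
    ring
  exact even_orderOf_and_pow_orderOf_div_two_eq neg_one_sq ZMod.neg_one_ne_one
    (pow_eq_of_pow_eq_mul_pow hfin key)

/-- Suppose `a^x + b^y = c^z` has two positive solutions with `y₁` odd and `y₂` even.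
Then the multiplicative order `u` of `a` modulo `c` is even and `a^(u/2) ≡ -1 (mod c)`. -/
theorem odd_even_y_order_a (a b c : ℕ) (ha : 1 < a) (hb : 1 < b)
    (hab : Nat.Coprime a b) (hc : 1 < c) (hcodd : Odd c)
    (x₁ y₁ z₁ x₂ y₂ z₂ : ℕ) (hx₁ : 0 < x₁) (hy₁ : 0 < y₁) (hz₁ : 0 < z₁)
    (hx₂ : 0 < x₂) (hy₂ : 0 < y₂) (hz₂ : 0 < z₂)
    (heq₁ : a ^ x₁ + b ^ y₁ = c ^ z₁) (heq₂ : a ^ x₂ + b ^ y₂ = c ^ z₂)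
    (hodd : Odd y₁) (heven : Even y₂) :
    Even (orderOf (a : ZMod c)) ∧ (a : ZMod c) ^ (orderOf (a : ZMod c) / 2) = -1 :=
  odd_even_y_order_a_general a b c hab hc hcodd x₁ y₁ z₁ x₂ y₂ z₂ hx₁ hz₁ hz₂ heq₁ heq₂ hodd heven
end

section
/- Every solution in positive integers (x, y, z) to the equation 3^x + 10^y = 13^z has y odd. -/
/-! Reduce modulo 13. There `10 ^ 2 = 9 = 3 ^ 2`, so an even `y` would make `3 ^ x + 3 ^ y = 0`;
but `3` has order 3 modulo 13, its powers are `1, 3, 9`, and no two of these sum to `13`. -/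

lemma ZMod.three_pow_mem (n : ℕ) : (3 : ZMod 13) ^ n ∈ ({1, 3, 9} : Finset (ZMod 13)) := by
  rw [pow_eq_pow_mod n (by decide : (3 : ZMod 13) ^ 3 = 1)]
  have : n % 3 < 3 := Nat.mod_lt n (by norm_num)
  interval_cases n % 3 <;> decide

lemma ZMod.three_pow_add_three_pow_ne_zero (m n : ℕ) : (3 : ZMod 13) ^ m + 3 ^ n ≠ 0 := by
  have key : ∀ a ∈ ({1, 3, 9} : Finset (ZMod 13)), ∀ b ∈ ({1, 3, 9} : Finset (ZMod 13)),
      a + b ≠ 0 := by decide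
  exact key _ (three_pow_mem m) _ (three_pow_mem n)

lemma ZMod.ten_pow_two_mul (k : ℕ) : (10 : ZMod 13) ^ (2 * k) = 3 ^ (2 * k) := by
  rw [pow_mul, pow_mul, show (10 : ZMod 13) ^ 2 = 3 ^ 2 by decide]

theorem y_odd_3_10_13_general (x y z : ℕ) (hz : 0 < z)
    (heq : 3 ^ x + 10 ^ y = 13 ^ z) : Odd y := by
  by_contra hodd
  obtain ⟨k, rfl⟩ := (Nat.not_odd_iff_even.mp hodd).two_dvd
  have hmod : (3 : ZMod 13) ^ x + 10 ^ (2 * k) = 13 ^ z := by exact_mod_cast congrArg Nat.cast heq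
  rw [ZMod.ten_pow_two_mul, show (13 : ZMod 13) = 0 by decide, zero_pow hz.ne'] at hmod
  exact ZMod.three_pow_add_three_pow_ne_zero x (2 * k) hmod

/-- Every solution in positive integers `(x, y, z)` of `3^x + 10^y = 13^z` has `y` odd. -/
theorem y_odd_3_10_13 (x y z : ℕ) (hx : 0 < x) (hy : 0 < y) (hz : 0 < z)
    (heq : 3 ^ x + 10 ^ y = 13 ^ z) : Odd y :=
  y_odd_3_10_13_general x y z hz heq
end

section
/- The equation 3^x + 13^y = 2200^z has exactly two solutions in positive integers (x, y, z), namely (x, y, z) = (7, 1, 1) and (x, y, z) = (1, 3, 1). -/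
/-!
Modulo `80 = 16 · 5` both `3` and `13` have order dividing `4`, and none of the sixteen sums
`3 ^ i + 13 ^ j` with `i, j < 4` vanishes, whereas `80 ∣ 2200 ^ 2`. Hence `z = 1`, and
`3 ^ x + 13 ^ y = 2200` leaves only finitely many candidates `x < 8`, `y < 4`.
-/

lemma three_pow_add_thirteen_pow_ne_zero (x y : ℕ) : (3 ^ x + 13 ^ y : ZMod 80) ≠ 0 := by
  have key : ∀ i j : Fin 4, (3 ^ (i : ℕ) + 13 ^ (j : ℕ) : ZMod 80) ≠ 0 := by decide
  rw [pow_eq_pow_mod x (by decide : (3 : ZMod 80) ^ 4 = 1),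
    pow_eq_pow_mod y (by decide : (13 : ZMod 80) ^ 4 = 1)]
  exact key ⟨x % 4, Nat.mod_lt x (by norm_num)⟩ ⟨y % 4, Nat.mod_lt y (by norm_num)⟩

lemma eq_one_of_three_pow_add_thirteen_pow_eq {x y z : ℕ} (hz : 0 < z)
    (h : 3 ^ x + 13 ^ y = 2200 ^ z) : z = 1 := by
  by_contra hz1
  obtain ⟨k, rfl⟩ := Nat.exists_eq_add_of_le (show 2 ≤ z by omega)
  apply three_pow_add_thirteen_pow_ne_zero x y
  have h80 : (2200 : ZMod 80) ^ 2 = 0 := by decide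
  have h' := congrArg (Nat.cast : ℕ → ZMod 80) h
  push_cast at h'
  rw [h', pow_add, h80, zero_mul]

lemma three_pow_add_thirteen_pow_eq_2200 {x y : ℕ} (hx : 0 < x) (hy : 0 < y)
    (h : 3 ^ x + 13 ^ y = 2200) : (x, y) = (7, 1) ∨ (x, y) = (1, 3) := by
  have hx8 : x < 8 := by
    have : 3 ^ x < 3 ^ 8 := by have := Nat.one_le_pow y 13 (by norm_num); omega
    exact (Nat.pow_lt_pow_iff_right (by norm_num)).mp this
  have hy4 : y < 4 := by
    have : 13 ^ y < 13 ^ 4 := by have := Nat.one_le_pow x 3 (by norm_num); omega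
    exact (Nat.pow_lt_pow_iff_right (by norm_num)).mp this
  interval_cases x <;> interval_cases y <;> simp_all

/-- The equation `3^x + 13^y = 2200^z` has exactly two solutions in positive integers
`(x, y, z)`, namely `(7, 1, 1)` and `(1, 3, 1)`. -/
theorem solutions_3_13_2200 :
    {p : ℕ × ℕ × ℕ | 0 < p.1 ∧ 0 < p.2.1 ∧ 0 < p.2.2 ∧
      3 ^ p.1 + 13 ^ p.2.1 = 2200 ^ p.2.2} = {(7, 1, 1), (1, 3, 1)} := by
  ext ⟨x, y, z⟩
  simp only [Set.mem_ofPred_eq, Set.mem_insert_iff, Set.mem_singleton_iff, Prod.mk.injEq]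
  constructor
  · rintro ⟨hx, hy, hz, h⟩
    obtain rfl := eq_one_of_three_pow_add_thirteen_pow_eq hz h
    rw [pow_one] at h
    simpa using three_pow_add_thirteen_pow_eq_2200 hx hy h
  · rintro (⟨rfl, rfl, rfl⟩ | ⟨rfl, rfl, rfl⟩) <;> norm_num
end

section
/- The equation 3^x + 13^y = 2200^z has no solution in positive integers (x, y, z) with z ≥ 2. -/
/-!
Work modulo `80 = 16 · 5`. Since `8 ∣ 2200` and `5 ∣ 2200`, every `2200 ^ z` with `z ≥ 2` vanishes
modulo `80`. On the other hand `3 ^ 4 = 81 ≡ 1` and `13 ^ 4 ≡ 9 ^ 2 ≡ 1` modulo `80`, so `3 ^ x + 13 ^ y`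
only depends on `x` and `y` modulo `4`, and none of the sixteen resulting residues is `0`.
-/

lemma eighty_dvd_two_thousand_two_hundred_pow {z : ℕ} (hz : 2 ≤ z) : 80 ∣ 2200 ^ z :=
  (by norm_num : 80 ∣ 2200 ^ 2).trans (pow_dvd_pow 2200 hz)

lemma three_pow_add_thirteen_pow_ne_zero_zmod_eighty (x y : ℕ) :
    (3 : ZMod 80) ^ x + 13 ^ y ≠ 0 := by
  have residues : ∀ a < 4, ∀ b < 4, (3 : ZMod 80) ^ a + 13 ^ b ≠ 0 := by decide
  rw [pow_eq_pow_mod x (by decide : (3 : ZMod 80) ^ 4 = 1),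
    pow_eq_pow_mod y (by decide : (13 : ZMod 80) ^ 4 = 1)]
  exact residues _ (x.mod_lt (by norm_num)) _ (y.mod_lt (by norm_num))

theorem no_solution_3_13_2200_z_ge_two_general (x y z : ℕ)
    (hz : 2 ≤ z) : 3 ^ x + 13 ^ y ≠ 2200 ^ z := by
  intro h
  have hzero : ((3 ^ x + 13 ^ y : ℕ) : ZMod 80) = 0 := by
    rw [h, ZMod.natCast_eq_zero_iff]
    exact eighty_dvd_two_thousand_two_hundred_pow hz
  push_cast at hzero
  exact three_pow_add_thirteen_pow_ne_zero_zmod_eighty x y hzero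

/-- The equation `3^x + 13^y = 2200^z` has no solution in positive integers `(x, y, z)`
with `z ≥ 2`. -/
theorem no_solution_3_13_2200_z_ge_two (x y z : ℕ) (hx : 0 < x) (hy : 0 < y)
    (hz : 2 ≤ z) : 3 ^ x + 13 ^ y ≠ 2200 ^ z :=
  no_solution_3_13_2200_z_ge_two_general x y z hz
end

section
/- The equation 5^x + 2^y = 3^z has exactly two solutions in positive integers (x, y, z), namely (x, y, z) = (1, 2, 2) and (x, y, z) = (2, 1, 3). -/
/-!
Everything reduces to congruences, except one factorization. If `y ≥ 3`, the equation modulo 8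
makes `x` and `z` even, modulo 3 it then makes `y` odd, and modulo 5 it makes `y ≡ z (mod 2)`.
If `y = 2`, it makes `z = 2w` even modulo 4, and then `(3^w - 2)(3^w + 2) = 5^x` exhibits two
powers of 5 differing by 4, so `3^w - 2 = 1`. If `y = 1` and `x ≥ 3`, then `3^z ≡ 2 (mod 125)`
forces `z ≡ 43 (mod 100)`, which is incompatible with the equation modulo `1111 = 11 · 101`.
-/

theorem Nat.eq_one_of_mul_add_eq_prime_pow {p a d x : ℕ} (hp : p.Prime) (hd : ¬p ∣ d)
    (h : a * (a + d) = p ^ x) : a = 1 := by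
  obtain ⟨i, -, rfl⟩ := (Nat.dvd_prime_pow hp).1 (Dvd.intro _ h)
  obtain ⟨j, -, hj⟩ := (Nat.dvd_prime_pow hp).1 (Dvd.intro_left _ h)
  rcases i.eq_zero_or_pos with rfl | hi
  · exact pow_zero p
  rcases j.eq_zero_or_pos with rfl | hj0
  · have := Nat.one_lt_pow hi.ne' hp.one_lt
    rw [pow_zero] at hj
    omega
  · have hpi : p ∣ p ^ i + d := hj ▸ dvd_pow_self p hj0.ne'
    exact absurd ((Nat.dvd_add_right (dvd_pow_self p hi.ne')).1 hpi) hd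

theorem five_pow_add_two_pow_ne_three_pow {x y z : ℕ} (hx : 0 < x) (hy : 3 ≤ y) (hz : 0 < z) :
    5 ^ x + 2 ^ y ≠ 3 ^ z := by
  intro h
  have hm : ∀ m, (5 : ZMod m) ^ x + 2 ^ y = 3 ^ z := fun m => by
    exact_mod_cast congrArg (Nat.cast : ℕ → ZMod m) h
  obtain ⟨hx2, hz2⟩ : x % 2 = 0 ∧ z % 2 = 0 := by
    have key : ∀ a < 2, ∀ b < 2, (5 : ZMod 8) ^ a = 3 ^ b → a = 0 ∧ b = 0 := by decide
    refine key _ (x.mod_lt two_pos) _ (z.mod_lt two_pos) ?_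
    rw [← pow_eq_pow_mod x (by decide), ← pow_eq_pow_mod z (by decide), ← hm 8,
      pow_eq_zero_of_le hy (by decide), add_zero]
  have hy2 : y % 2 = 1 := by
    have key : ∀ b < 2, (1 : ZMod 3) + 2 ^ b = 0 → b = 1 := by decide
    refine key _ (y.mod_lt two_pos) ?_
    have h3 := hm 3
    rwa [pow_eq_pow_mod x (by decide : (5 : ZMod 3) ^ 2 = 1), hx2, pow_zero,
      pow_eq_pow_mod y (by decide : (2 : ZMod 3) ^ 2 = 1),
      pow_eq_zero_of_le hz (by decide : (3 : ZMod 3) ^ 1 = 0)] at h3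
  have hyz : y % 4 % 2 = z % 4 % 2 := by
    have key : ∀ a < 4, ∀ b < 4, (2 : ZMod 5) ^ a = 3 ^ b → a % 2 = b % 2 := by decide
    refine key _ (y.mod_lt (by norm_num)) _ (z.mod_lt (by norm_num)) ?_
    have h5 := hm 5
    rwa [pow_eq_zero_of_le hx (by decide : (5 : ZMod 5) ^ 1 = 0), zero_add,
      pow_eq_pow_mod y (by decide : (2 : ZMod 5) ^ 4 = 1),
      pow_eq_pow_mod z (by decide : (3 : ZMod 5) ^ 4 = 1)] at h5
  omega

theorem five_pow_add_two_ne_three_pow {x z : ℕ} (hx : 3 ≤ x) : 5 ^ x + 2 ≠ 3 ^ z := by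
  intro h
  have hm : ∀ m, (5 : ZMod m) ^ x + 2 = 3 ^ z := fun m => by
    exact_mod_cast congrArg (Nat.cast : ℕ → ZMod m) h
  have hz : z % 100 = 43 := by
    have key : ∀ r < 100, (3 : ZMod 125) ^ r = 2 → r = 43 := by decide
    refine key _ (z.mod_lt (by norm_num)) ?_
    rw [← pow_eq_pow_mod z (by reduce_mod_char), ← hm 125, pow_eq_zero_of_le hx (by decide),
      zero_add]
  -- `3 ^ 100 = 5 ^ 25 = 1` in `ZMod 1111`, so `5 ^ x` takes only 25 values there.
  have key : ∀ r < 25, (5 : ZMod 1111) ^ r + 2 ≠ 3 ^ 43 := by decide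
  refine key _ (x.mod_lt (by norm_num)) ?_
  rw [← pow_eq_pow_mod x (by reduce_mod_char), ← hz, ← pow_eq_pow_mod z (by reduce_mod_char)]
  exact hm 1111

theorem five_pow_add_two_eq_three_pow {x z : ℕ} (hx : 0 < x) (hz : 0 < z)
    (h : 5 ^ x + 2 = 3 ^ z) : x = 2 ∧ z = 3 := by
  have hx2 : x ≤ 2 := by
    by_contra! hx3
    exact five_pow_add_two_ne_three_pow hx3 h
  interval_cases x
  · have h3 : 3 ∣ 5 ^ 1 + 2 := h ▸ dvd_pow_self 3 hz.ne'
    norm_num at h3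
  · exact ⟨rfl, Nat.pow_right_injective (by norm_num) (h.symm.trans rfl : 3 ^ z = 3 ^ 3)⟩

theorem five_pow_add_four_eq_three_pow {x z : ℕ} (h : 5 ^ x + 4 = 3 ^ z) : x = 1 ∧ z = 2 := by
  have hz2 : z % 2 = 0 := by
    have key : ∀ b < 2, (1 : ZMod 4) = 3 ^ b → b = 0 := by decide
    refine key _ (z.mod_lt two_pos) ?_
    have h4 := congrArg (Nat.cast : ℕ → ZMod 4) h
    push_cast at h4
    reduce_mod_char at h4
    rw [← pow_eq_pow_mod z (by decide), ← h4, one_pow]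
  obtain ⟨w, rfl⟩ := Nat.dvd_of_mod_eq_zero hz2
  have hw : w ≠ 0 := by
    rintro rfl
    simp at h
  obtain ⟨a, ha⟩ : ∃ a, 3 ^ w = a + 2 :=
    ⟨3 ^ w - 2, by have := Nat.one_lt_pow hw (by norm_num : 1 < 3); omega⟩
  have hfac : a * (a + 4) = 5 ^ x := by
    rw [pow_mul', ha] at h
    nlinarith
  obtain rfl := Nat.eq_one_of_mul_add_eq_prime_pow Nat.prime_five (by norm_num) hfac
  refine ⟨(Nat.pow_eq_self_iff (by norm_num)).1 hfac.symm, ?_⟩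
  rw [(Nat.pow_eq_self_iff (by norm_num)).1 ha]

/-- The equation `5^x + 2^y = 3^z` has exactly two solutions in positive integers
`(x, y, z)`, namely `(1, 2, 2)` and `(2, 1, 3)`. -/
theorem solutions_5_2_3 :
    {p : ℕ × ℕ × ℕ | 0 < p.1 ∧ 0 < p.2.1 ∧ 0 < p.2.2 ∧
      5 ^ p.1 + 2 ^ p.2.1 = 3 ^ p.2.2} = {(1, 2, 2), (2, 1, 3)} := by
  ext ⟨x, y, z⟩
  simp only [Set.mem_ofPred_eq, Set.mem_insert_iff, Set.mem_singleton_iff, Prod.mk.injEq]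
  constructor
  · rintro ⟨hx, hy, hz, h⟩
    obtain rfl | rfl | hy3 : y = 1 ∨ y = 2 ∨ 3 ≤ y := by omega
    · obtain ⟨rfl, rfl⟩ := five_pow_add_two_eq_three_pow hx hz h
      simp
    · obtain ⟨rfl, rfl⟩ := five_pow_add_four_eq_three_pow h
      simp
    · exact absurd h (five_pow_add_two_pow_ne_three_pow hx hy3 hz)
  · rintro (⟨rfl, rfl, rfl⟩ | ⟨rfl, rfl, rfl⟩) <;> norm_num
end

section
/- The equation 3^x + 2^y = 11^z has exactly two solutions in positive integers (x, y, z), namely (x, y, z) = (2, 1, 1) and (x, y, z) = (1, 3, 1). -/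
/-!
If `z ≥ 2`, then `121 ∣ 3^x + 2^y`. Combine this with the equation modulo
`2047 = 2^11 - 1 = 23 · 89`, where `2` has the small order `11`: the powers of `3` and `2` modulo
`121 · 2047` and those of `11` modulo `2047` have periods dividing `440`, `110` and `22`, so a finite
check of residues rules out every `z ≥ 2`. For `z = 1` the equation `3^x + 2^y = 11` is solved
by inspection.
-/

theorem Nat.ModEq.pow_modEq_pow_mod {a n T P : ℕ} (h : a ^ T ≡ 1 [MOD n]) (hTP : T ∣ P)
    (x : ℕ) : a ^ x ≡ a ^ (x % P) [MOD n] := by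
  obtain ⟨k, rfl⟩ := hTP
  conv_lhs => rw [← Nat.div_add_mod x (T * k), pow_add, pow_mul, pow_mul]
  simpa using ((h.pow k).pow (x / (T * k))).mul_right (a ^ (x % (T * k)))

theorem three_pow_add_two_pow_residues :
    ∀ a < 440, ∀ b < 110, 3 ^ a + 2 ^ b ≡ 0 [MOD 121] →
      ∀ c < 22, ¬ 3 ^ a + 2 ^ b ≡ 11 ^ c [MOD 2047] := by
  decide +kernel

theorem three_pow_add_two_pow_ne_eleven_pow {x y z : ℕ} (hz : 2 ≤ z) :
    3 ^ x + 2 ^ y ≠ 11 ^ z := by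
  intro h
  have h121 : 3 ^ (x % 440) + 2 ^ (y % 110) ≡ 0 [MOD 121] := calc
    _ ≡ 3 ^ x + 2 ^ y [MOD 121] :=
      ((Nat.ModEq.pow_modEq_pow_mod (by decide : 3 ^ 5 ≡ 1 [MOD 121]) (by norm_num) x).add
        (Nat.ModEq.pow_modEq_pow_mod (by decide : 2 ^ 110 ≡ 1 [MOD 121]) dvd_rfl y)).symm
    _ = 11 ^ 2 * 11 ^ (z - 2) := by rw [h, ← pow_add, Nat.add_sub_cancel' hz]
    _ ≡ 0 [MOD 121] := Nat.modEq_zero_iff_dvd.2 (dvd_mul_right _ _)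
  have h2047 : 3 ^ (x % 440) + 2 ^ (y % 110) ≡ 11 ^ (z % 22) [MOD 2047] := calc
    _ ≡ 3 ^ x + 2 ^ y [MOD 2047] :=
      ((Nat.ModEq.pow_modEq_pow_mod (by decide : 3 ^ 88 ≡ 1 [MOD 2047]) (by norm_num) x).add
        (Nat.ModEq.pow_modEq_pow_mod (by decide : 2 ^ 11 ≡ 1 [MOD 2047]) (by norm_num) y)).symm
    _ = 11 ^ z := h
    _ ≡ 11 ^ (z % 22) [MOD 2047] :=
      Nat.ModEq.pow_modEq_pow_mod (by decide : 11 ^ 22 ≡ 1 [MOD 2047]) dvd_rfl z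
  exact three_pow_add_two_pow_residues _ (Nat.mod_lt _ (by norm_num)) _
    (Nat.mod_lt _ (by norm_num)) h121 _ (Nat.mod_lt _ (by norm_num)) h2047

theorem three_pow_add_two_pow_eq_eleven {x y : ℕ} (h : 3 ^ x + 2 ^ y = 11) : x = 2 ∧ y = 1 ∨ x = 1 ∧ y = 3 := by
  have hx3 : x < 3 := by
    have : 3 ^ x < 3 ^ 3 := by linarith [Nat.zero_le (2 ^ y)]
    exact (Nat.pow_lt_pow_iff_right (by norm_num)).1 this
  have hy4 : y < 4 := by
    have : 2 ^ y < 2 ^ 4 := by linarith [Nat.zero_le (3 ^ x)]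
    exact (Nat.pow_lt_pow_iff_right (by norm_num)).1 this
  interval_cases x <;> interval_cases y <;> simp_all

/-- The equation `3^x + 2^y = 11^z` has exactly two solutions in positive integers
`(x, y, z)`, namely `(2, 1, 1)` and `(1, 3, 1)`. -/
theorem solutions_3_2_11 :
    {p : ℕ × ℕ × ℕ | 0 < p.1 ∧ 0 < p.2.1 ∧ 0 < p.2.2 ∧
      3 ^ p.1 + 2 ^ p.2.1 = 11 ^ p.2.2} = {(2, 1, 1), (1, 3, 1)} := by
  ext ⟨x, y, z⟩
  simp only [Set.mem_ofPred_eq, Set.mem_insert_iff, Set.mem_singleton_iff, Prod.mk.injEq]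
  constructor
  · rintro ⟨-, -, hz, h⟩
    obtain rfl : z = 1 := by
      by_contra hz1
      exact three_pow_add_two_pow_ne_eleven_pow (by omega) h
    simpa using three_pow_add_two_pow_eq_eleven (by simpa using h)
  · rintro (⟨rfl, rfl, rfl⟩ | ⟨rfl, rfl, rfl⟩) <;> norm_num
end

section
/- The equation 3^x + 5^y = 2^z has exactly three solutions in positive integers (x, y, z), namely (x, y, z) = (1, 1, 3), (x, y, z) = (3, 1, 5), and (x, y, z) = (1, 3, 7). -/
/-!
For `z ≥ 8` the equation is ruled out by congruences, leaving finitely many candidates.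
Modulo 16 and 5, a solution with `z ≥ 4` has `(x, y, z) ≡ (3, 1, 1)` or `(1, 3, 3) (mod 4)`.
The first class dies modulo 64 and 17, the second modulo 13, 9 and 7 once `x ≥ 2`.
The case `x = 1` survives these congruences because `(1, 3, 7)` is a solution: there
`3 + 5^y ≡ 0 (mod 256)` forces `y ≡ 35 (mod 64)`, and modulo `641 = 5 * 2^7 + 1`, where 2 and 5
both have order 64, this is incompatible with `3 + 5^y = 2^z`.
-/

namespace ThreeFiveTwo

variable {x y z : ℕ}

theorem zmod_cast_of_eq (m : ℕ) (h : 3 ^ x + 5 ^ y = 2 ^ z) :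
    (3 : ZMod m) ^ x + 5 ^ y = 2 ^ z := by
  exact_mod_cast congrArg (Nat.cast : ℕ → ZMod m) h

theorem three_add_five_pow_ne_two_pow (hz : 8 ≤ z) : 3 + 5 ^ y ≠ 2 ^ z := by
  intro h
  have hcast (m : ℕ) : (3 : ZMod m) + 5 ^ y = 2 ^ z := by
    exact_mod_cast congrArg (Nat.cast : ℕ → ZMod m) h
  have h256 := hcast 256
  rw [pow_eq_zero_of_le hz (by decide : (2 : ZMod 256) ^ 8 = 0),
    pow_eq_pow_mod y (by decide : (5 : ZMod 256) ^ 64 = 1)] at h256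
  have hy : y % 64 = 35 := by
    have key : ∀ b : Fin 64, (3 : ZMod 256) + 5 ^ b.val = 0 → b.val = 35 := by decide
    exact key ⟨y % 64, Nat.mod_lt _ (by norm_num)⟩ h256
  have h641 := hcast 641
  rw [pow_eq_pow_mod y (by decide : (5 : ZMod 641) ^ 64 = 1),
    pow_eq_pow_mod z (by decide : (2 : ZMod 641) ^ 64 = 1), hy] at h641
  have key : ∀ c : Fin 64, (3 : ZMod 641) + 5 ^ 35 ≠ 2 ^ c.val := by decide
  exact key ⟨z % 64, Nat.mod_lt _ (by norm_num)⟩ h641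

theorem mod_four_of_eq (hz : 4 ≤ z) (h : 3 ^ x + 5 ^ y = 2 ^ z) :
    x % 4 = 1 ∧ y % 4 = 3 ∨ x % 4 = 3 ∧ y % 4 = 1 := by
  have h16 := zmod_cast_of_eq 16 h
  rw [pow_eq_zero_of_le hz (by decide : (2 : ZMod 16) ^ 4 = 0),
    pow_eq_pow_mod x (by decide : (3 : ZMod 16) ^ 4 = 1),
    pow_eq_pow_mod y (by decide : (5 : ZMod 16) ^ 4 = 1)] at h16
  have key : ∀ a b : Fin 4, (3 : ZMod 16) ^ a.val + 5 ^ b.val = 0 →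
      a.val = 1 ∧ b.val = 3 ∨ a.val = 3 ∧ b.val = 1 := by decide
  exact key ⟨x % 4, Nat.mod_lt _ (by norm_num)⟩ ⟨y % 4, Nat.mod_lt _ (by norm_num)⟩ h16

theorem z_mod_four_of_eq (hy : 0 < y) (h : 3 ^ x + 5 ^ y = 2 ^ z) :
    z % 4 = 3 * x % 4 := by
  have h5 := zmod_cast_of_eq 5 h
  rw [pow_eq_zero_of_le hy (by decide : (5 : ZMod 5) ^ 1 = 0), add_zero,
    pow_eq_pow_mod x (by decide : (3 : ZMod 5) ^ 4 = 1),
    pow_eq_pow_mod z (by decide : (2 : ZMod 5) ^ 4 = 1)] at h5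
  have key : ∀ a c : Fin 4, (3 : ZMod 5) ^ a.val = 2 ^ c.val → c.val = 3 * a.val % 4 := by
    decide
  have hz : z % 4 = 3 * (x % 4) % 4 :=
    key ⟨x % 4, Nat.mod_lt _ (by norm_num)⟩ ⟨z % 4, Nat.mod_lt _ (by norm_num)⟩ h5
  omega

theorem three_pow_add_five_pow_ne_of_mod_four_eq_three (hx : x % 4 = 3) (hz4 : z % 4 = 1)
    (hz : 6 ≤ z) : 3 ^ x + 5 ^ y ≠ 2 ^ z := by
  intro h
  have h64 := zmod_cast_of_eq 64 h
  rw [pow_eq_zero_of_le hz (by decide : (2 : ZMod 64) ^ 6 = 0),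
    pow_eq_pow_mod x (by decide : (3 : ZMod 64) ^ 16 = 1),
    pow_eq_pow_mod y (by decide : (5 : ZMod 64) ^ 16 = 1)] at h64
  have h17 := zmod_cast_of_eq 17 h
  rw [pow_eq_pow_mod x (by decide : (3 : ZMod 17) ^ 16 = 1),
    pow_eq_pow_mod y (by decide : (5 : ZMod 17) ^ 16 = 1),
    pow_eq_pow_mod z (by decide : (2 : ZMod 17) ^ 8 = 1)] at h17
  have key : ∀ a b : Fin 16, ∀ c : Fin 8, a.val % 4 = 3 → c.val % 4 = 1 →
      (3 : ZMod 64) ^ a.val + 5 ^ b.val = 0 →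
      (3 : ZMod 17) ^ a.val + 5 ^ b.val ≠ 2 ^ c.val := by
    decide
  exact key ⟨x % 16, Nat.mod_lt _ (by norm_num)⟩ ⟨y % 16, Nat.mod_lt _ (by norm_num)⟩
    ⟨z % 8, Nat.mod_lt _ (by norm_num)⟩ (show x % 16 % 4 = 3 by omega)
    (show z % 8 % 4 = 1 by omega) h64 h17

theorem three_pow_add_five_pow_ne_of_mod_four_eq_one (hx2 : 2 ≤ x) (hx : x % 4 = 1)
    (hy : y % 4 = 3) (hz : z % 4 = 3) : 3 ^ x + 5 ^ y ≠ 2 ^ z := by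
  intro h
  have h13 := zmod_cast_of_eq 13 h
  rw [pow_eq_pow_mod x (by decide : (3 : ZMod 13) ^ 12 = 1),
    pow_eq_pow_mod y (by decide : (5 : ZMod 13) ^ 12 = 1),
    pow_eq_pow_mod z (by decide : (2 : ZMod 13) ^ 12 = 1)] at h13
  have h9 := zmod_cast_of_eq 9 h
  rw [pow_eq_zero_of_le hx2 (by decide : (3 : ZMod 9) ^ 2 = 0), zero_add,
    pow_eq_pow_mod y (by decide : (5 : ZMod 9) ^ 12 = 1),
    pow_eq_pow_mod z (by decide : (2 : ZMod 9) ^ 12 = 1)] at h9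
  have h7 := zmod_cast_of_eq 7 h
  rw [pow_eq_pow_mod x (by decide : (3 : ZMod 7) ^ 12 = 1),
    pow_eq_pow_mod y (by decide : (5 : ZMod 7) ^ 12 = 1),
    pow_eq_pow_mod z (by decide : (2 : ZMod 7) ^ 12 = 1)] at h7
  have key : ∀ a b c : Fin 12, a.val % 4 = 1 → b.val % 4 = 3 → c.val % 4 = 3 →
      (3 : ZMod 13) ^ a.val + 5 ^ b.val = 2 ^ c.val → (5 : ZMod 9) ^ b.val = 2 ^ c.val →
      (3 : ZMod 7) ^ a.val + 5 ^ b.val ≠ 2 ^ c.val := by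
    decide
  exact key ⟨x % 12, Nat.mod_lt _ (by norm_num)⟩ ⟨y % 12, Nat.mod_lt _ (by norm_num)⟩
    ⟨z % 12, Nat.mod_lt _ (by norm_num)⟩ (show x % 12 % 4 = 1 by omega)
    (show y % 12 % 4 = 3 by omega) (show z % 12 % 4 = 3 by omega) h13 h9 h7

theorem le_seven_of_eq (hy : 0 < y) (h : 3 ^ x + 5 ^ y = 2 ^ z) : z ≤ 7 := by
  by_contra! hz
  have hz4 := z_mod_four_of_eq hy h
  rcases mod_four_of_eq (by omega) h with ⟨hx4, hy4⟩ | ⟨hx4, -⟩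
  · obtain rfl | hx2 : x = 1 ∨ 2 ≤ x := by omega
    · exact three_add_five_pow_ne_two_pow hz (by simpa using h)
    · exact three_pow_add_five_pow_ne_of_mod_four_eq_one hx2 hx4 hy4 (by omega) h
  · exact three_pow_add_five_pow_ne_of_mod_four_eq_three hx4 (by omega) (by omega) h

end ThreeFiveTwo

/-- The equation `3^x + 5^y = 2^z` has exactly three solutions in positive integers
`(x, y, z)`, namely `(1, 1, 3)`, `(3, 1, 5)` and `(1, 3, 7)`. -/
theorem solutions_3_5_2 :
    {p : ℕ × ℕ × ℕ | 0 < p.1 ∧ 0 < p.2.1 ∧ 0 < p.2.2 ∧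
      3 ^ p.1 + 5 ^ p.2.1 = 2 ^ p.2.2} = {(1, 1, 3), (3, 1, 5), (1, 3, 7)} := by
  ext ⟨x, y, z⟩
  simp only [Set.mem_ofPred_eq, Set.mem_insert_iff, Set.mem_singleton_iff, Prod.mk.injEq]
  constructor
  · rintro ⟨hx, hy, -, h⟩
    have hz := ThreeFiveTwo.le_seven_of_eq hy h
    have hsum : 3 ^ x + 5 ^ y ≤ 2 ^ 7 := h ▸ Nat.pow_le_pow_right (by norm_num) hz
    have hx5 : x < 5 :=
      (Nat.pow_lt_pow_iff_right (a := 3) (by norm_num)).1 (by linarith [Nat.zero_le (5 ^ y)])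
    have hy4 : y < 4 :=
      (Nat.pow_lt_pow_iff_right (a := 5) (by norm_num)).1 (by linarith [Nat.zero_le (3 ^ x)])
    have key : ∀ a : Fin 5, ∀ b : Fin 4, ∀ c : Fin 8, 0 < a.val → 0 < b.val →
        3 ^ a.val + 5 ^ b.val = 2 ^ c.val →
        a.val = 1 ∧ b.val = 1 ∧ c.val = 3 ∨ a.val = 3 ∧ b.val = 1 ∧ c.val = 5 ∨
          a.val = 1 ∧ b.val = 3 ∧ c.val = 7 := by
      decide
    exact key ⟨x, hx5⟩ ⟨y, hy4⟩ ⟨z, by omega⟩ hx hy h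
  · rintro (⟨rfl, rfl, rfl⟩ | ⟨rfl, rfl, rfl⟩ | ⟨rfl, rfl, rfl⟩) <;> norm_num
end
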